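/- Let A ∈ ℝ^{n×n}, B ∈ ℝ^{n×m}, C ∈ ℝ^{p×n}. Let Ū ∈ St(r,n) satisfy (I_n − ŪŪᵀ)·A·Ū = 0 and let Ū_⊥ ∈ St(n−r,n) satisfy ŪᵀŪ_⊥ = 0 and Ū·Ūᵀ + Ū_⊥·Ū_⊥ᵀ = I_n; similarly let V̄ ∈ St(r,n) satisfy (I_n − V̄V̄ᵀ)·Aᵀ·V̄ = 0 with complement V̄_⊥. Suppose every eigenvalue (root of the characteristic polynomial over ℂ) of Ū_⊥ᵀAŪ_⊥ has strictly negative real part (equivalently for V̄_⊥ᵀAV̄_⊥). Then: (i) for any L ∈ ℝ^{r×p} such that every eigenvalue of ŪᵀAŪ − L·(CŪ) has strictly negative real part, every eigenvalue of A − Ū·L·C has strictly negative real part; and (ii) for any F ∈ ℝ^{m×r} such that every eigenvalue of V̄ᵀAV̄ − (V̄ᵀB)·F has strictly negative real part, every eigenvalue of A − B·F·V̄ᵀ has strictly negative real part. -/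

import Mathlib

/-!
Let `U` span an `A`-invariant subspace and `P` span its orthogonal complement. In the
orthonormal basis `[U, P]` the matrix `A` is block upper triangular, so its characteristic
polynomial is the product of those of `UᵀAU` and `PᵀAP`, and its spectrum is the union of
theirs. Output injection `A ↦ A - U L C` keeps this triangular shape, leaves the block `PᵀAP`
unchanged and replaces `UᵀAU` by `UᵀAU - L (C U)`; hence it is Hurwitz as soon as both
diagonal blocks are. State feedback `A ↦ A - B F Vᵀ` is the transpose of output injection for
`Aᵀ`.
-/

open Matrix

/-- A real square matrix is Hurwitz if every root of its characteristic polynomial over `ℂ`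
has strictly negative real part. -/
def IsHurwitz {k : ℕ} (M : Matrix (Fin k) (Fin k) ℝ) : Prop :=
  ∀ μ ∈ ((M.map (Complex.ofReal ·)).charpoly).roots, μ.re < 0

namespace Matrix

theorem transpose_mul_mul_eq_zero_of_invariant {R : Type*} [Ring R] {n r s : Type*}
    [Fintype n] [Fintype r] [DecidableEq n] {A : Matrix n n R} {U : Matrix n r R}
    {P : Matrix n s R} (hPU : Pᵀ * U = 0) (hAU : (1 - U * Uᵀ) * A * U = 0) :
    Pᵀ * A * U = 0 := by
  simpa [Matrix.mul_sub, ← Matrix.mul_assoc, hPU] using congr_arg (Pᵀ * ·) hAU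

variable {R : Type*} [CommRing R] {m n : Type*} [Fintype m] [Fintype n] [DecidableEq m]
  [DecidableEq n]

theorem charpoly_transpose_mul_mul_of_transpose_mul_self (e : m ≃ n) {T : Matrix n m R}
    (hT : Tᵀ * T = 1) (M : Matrix n n R) : (Tᵀ * M * T).charpoly = M.charpoly := by
  set S : Matrix n n R := T.submatrix id e.symm
  have hconj (N : Matrix n n R) : Sᵀ * N * S = reindex e e (Tᵀ * N * T) := by
    ext i j; simp [S, Matrix.mul_apply]
  have hS : S * Sᵀ = 1 := mul_eq_one_comm.mp (by simpa [hT] using hconj 1)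
  rw [← charpoly_reindex e, ← hconj, Matrix.mul_assoc, charpoly_mul_comm, Matrix.mul_assoc, hS,
    Matrix.mul_one]

theorem charpoly_eq_mul_of_transpose_mul_mul_eq_zero {r s : Type*} [Fintype r] [Fintype s]
    [DecidableEq r] [DecidableEq s] (e : r ⊕ s ≃ n) (M : Matrix n n R)
    {U : Matrix n r R} {P : Matrix n s R} (hUU : Uᵀ * U = 1) (hPP : Pᵀ * P = 1)
    (hUP : Uᵀ * P = 0) (hPMU : Pᵀ * M * U = 0) :
    M.charpoly = (Uᵀ * M * U).charpoly * (Pᵀ * M * P).charpoly := by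
  have hPU : Pᵀ * U = 0 := by simpa using congr_arg transpose hUP
  have hT : (fromCols U P)ᵀ * fromCols U P = 1 := by
    rw [transpose_fromCols, fromRows_mul_fromCols, hUU, hUP, hPU, hPP, fromBlocks_one]
  rw [← charpoly_transpose_mul_mul_of_transpose_mul_self e hT M, transpose_fromCols,
    fromRows_mul, fromRows_mul_fromCols, hPMU, charpoly_fromBlocks_zero₂₁]

end Matrix

theorem isHurwitz_transpose_iff {k : ℕ} {M : Matrix (Fin k) (Fin k) ℝ} :
    IsHurwitz Mᵀ ↔ IsHurwitz M := by
  rw [IsHurwitz, IsHurwitz, transpose_map, charpoly_transpose]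

theorem isHurwitz_of_charpoly_eq_mul {k a b : ℕ} {M : Matrix (Fin k) (Fin k) ℝ}
    {M₁ : Matrix (Fin a) (Fin a) ℝ} {M₂ : Matrix (Fin b) (Fin b) ℝ}
    (h : M.charpoly = M₁.charpoly * M₂.charpoly) (h₁ : IsHurwitz M₁) (h₂ : IsHurwitz M₂) :
    IsHurwitz M := by
  intro μ hμ
  have hmap : ∀ {j : ℕ} (N : Matrix (Fin j) (Fin j) ℝ),
      (N.map (Complex.ofReal ·)).charpoly = N.charpoly.map Complex.ofRealHom :=
    fun N => charpoly_map N Complex.ofRealHom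
  rw [hmap, h, Polynomial.map_mul, ← hmap, ← hmap, Polynomial.roots_mul
    (mul_ne_zero (charpoly_monic _).ne_zero (charpoly_monic _).ne_zero), Multiset.mem_add] at hμ
  exact hμ.elim (h₁ μ) (h₂ μ)

theorem isHurwitz_sub_mul_mul_of_invariant {n r s p : ℕ} (hn : r + s = n)
    {A : Matrix (Fin n) (Fin n) ℝ} {U : Matrix (Fin n) (Fin r) ℝ} {P : Matrix (Fin n) (Fin s) ℝ}
    (hUU : Uᵀ * U = 1) (hPP : Pᵀ * P = 1) (hUP : Uᵀ * P = 0)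
    (hAU : (1 - U * Uᵀ) * A * U = 0) (hP : IsHurwitz (Pᵀ * A * P))
    (C : Matrix (Fin p) (Fin n) ℝ) (L : Matrix (Fin r) (Fin p) ℝ)
    (hL : IsHurwitz (Uᵀ * A * U - L * (C * U))) : IsHurwitz (A - U * L * C) := by
  have hPU : Pᵀ * U = 0 := by simpa using congr_arg transpose hUP
  have hPAU := transpose_mul_mul_eq_zero_of_invariant hPU hAU
  have hblock₂₁ : Pᵀ * (A - U * L * C) * U = 0 := by
    simp [Matrix.mul_sub, ← Matrix.mul_assoc, hPU, hPAU]
  have hblock₁₁ : Uᵀ * (A - U * L * C) * U = Uᵀ * A * U - L * (C * U) := by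
    simp [Matrix.mul_sub, Matrix.sub_mul, ← Matrix.mul_assoc, hUU]
  have hblock₂₂ : Pᵀ * (A - U * L * C) * P = Pᵀ * A * P := by
    simp [Matrix.mul_sub, ← Matrix.mul_assoc, hPU]
  refine isHurwitz_of_charpoly_eq_mul (charpoly_eq_mul_of_transpose_mul_mul_eq_zero
    (finSumFinEquiv.trans (finCongr hn)) _ hUU hPP hUP hblock₂₁) ?_ ?_
  · rwa [hblock₁₁]
  · rwa [hblock₂₂]

theorem low_rank_stabilization
    (n r m p : ℕ) (hrn : r < n)
    (A : Matrix (Fin n) (Fin n) ℝ) (B : Matrix (Fin n) (Fin m) ℝ)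
    (C : Matrix (Fin p) (Fin n) ℝ)
    (Ub : Matrix (Fin n) (Fin r) ℝ) (hUbst : Ubᵀ * Ub = 1)
    (hUbeq : (1 - Ub * Ubᵀ) * A * Ub = 0)
    (Up : Matrix (Fin n) (Fin (n - r)) ℝ) (hUpst : Upᵀ * Up = 1)
    (hUorth : Ubᵀ * Up = 0)
    (Vb : Matrix (Fin n) (Fin r) ℝ) (hVbst : Vbᵀ * Vb = 1)
    (hVbeq : (1 - Vb * Vbᵀ) * Aᵀ * Vb = 0)
    (Vp : Matrix (Fin n) (Fin (n - r)) ℝ) (hVpst : Vpᵀ * Vp = 1)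
    (hVorth : Vbᵀ * Vp = 0)
    (hUpHur : IsHurwitz (Upᵀ * A * Up))
    (hVpHur : IsHurwitz (Vpᵀ * A * Vp)) :
    (∀ L : Matrix (Fin r) (Fin p) ℝ,
      IsHurwitz (Ubᵀ * A * Ub - L * (C * Ub)) → IsHurwitz (A - Ub * L * C)) ∧
    (∀ F : Matrix (Fin m) (Fin r) ℝ,
      IsHurwitz (Vbᵀ * A * Vb - (Vbᵀ * B) * F) → IsHurwitz (A - B * F * Vbᵀ)) := by
  have hn : r + (n - r) = n := Nat.add_sub_cancel' hrn.le
  refine ⟨isHurwitz_sub_mul_mul_of_invariant hn hUbst hUpst hUorth hUbeq hUpHur C, ?_⟩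
  intro F hF
  have hVpHur' : IsHurwitz (Vpᵀ * Aᵀ * Vp) := by
    rw [← isHurwitz_transpose_iff]; simpa [Matrix.mul_assoc] using hVpHur
  have hF' : IsHurwitz (Vbᵀ * Aᵀ * Vb - Fᵀ * (Bᵀ * Vb)) := by
    rw [← isHurwitz_transpose_iff]; simpa [Matrix.mul_assoc] using hF
  simpa [Matrix.mul_assoc] using isHurwitz_transpose_iff.mpr
    (isHurwitz_sub_mul_mul_of_invariant hn hVbst hVpst hVorth hVbeq hVpHur' Bᵀ Fᵀ hF')
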